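/- Let φ be a closed FOSL(−∗) formula whose quantified variables are among {x₁,…,x_q}, with distinct quantifications using distinct variables, and let X = {x₁,…,x_{2q}}. Then φ is valid (satisfied by all memory states) if and only if T_VAL(φ) := ((⋀_{i∈[1,2q]} ¬alloc(x_i)) ∧ Safe(X)) ⇒ T(φ, X) is valid (in SL(∗,−∗) extended with n(x)=n(y), n(x)↪n(y), alloc⁻¹(x)). -/

import Mathlib

/-!
The translation keeps the `FOSL` store inside the heap. The variables of `X` name pairwise
distinct cells which the `FOSL` heap neither allocates nor points to; an active variable `x` is
represented by its cell `s x` holding the value of `x`, so that `x = y` and `x ↪ y` become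
`n(x) = n(y)` and `n(x) ↪ n(y)`, and `∀ x` becomes the addition of one cell at `s x`. For
`φ −∗ ψ` the extension must evaluate `φ` under the current values of its free variables `z`, so
these are copied into the spare cells of the `z̄`, where the guard `n(z) = n(z̄)` makes the copy
faithful; the `∗` of the conclusion splits the copies off again before `ψ` is evaluated.

`FOSL` itself may choose values and heaps that touch the reserved cells, but its semantics is
invariant under permutations of locations, so such choices can be moved off the reserved cells.
The encoding therefore preserves satisfaction (by induction on the formula), and validity
transfers because every memory state has a store that puts `X` on fresh locations.
-/

namespace SL10

abbrev Var := ℕ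
abbrev Loc := ℕ

/-- A heap: a partial function on locations with finite domain. -/
structure Heap where
  f : Loc → Option Loc
  fin : {l | f l ≠ none}.Finite

/-- Domain of a heap. -/
def Heap.dom (h : Heap) : Set Loc := {l | h.f l ≠ none}

/-- Disjointness of heaps. -/
def Heap.Disj (h₁ h₂ : Heap) : Prop := ∀ l, h₁.f l = none ∨ h₂.f l = none

/-- Union of heaps (left-biased; used on disjoint heaps). -/
def Heap.union (h₁ h₂ : Heap) : Heap where
  f := fun l => (h₁.f l).or (h₂.f l)
  fin := by
    apply Set.Finite.subset (h₁.fin.union h₂.fin)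
    intro l hl
    simp only [Set.mem_setOf_eq] at hl
    by_cases h1 : h₁.f l = none
    · right
      simp only [Set.mem_setOf_eq]
      intro h2
      exact hl (by simp [h1, h2])
    · left; exact h1

/-- Formulas of first-order separation logic `FOSL(−∗)`. -/
inductive FForm : Type
  | eq (x y : Var)
  | pto (x y : Var)
  | not (φ : FForm)
  | or (φ ψ : FForm)
  | wand (φ ψ : FForm)
  | all (x : Var) (φ : FForm)

/-- The free variables of an `FOSL(−∗)` formula. -/
def FForm.fv : FForm → Finset Var
  | .eq x y => {x, y}
  | .pto x y => {x, y}
  | .not φ => φ.fv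
  | .or φ ψ => φ.fv ∪ ψ.fv
  | .wand φ ψ => φ.fv ∪ ψ.fv
  | .all x φ => φ.fv.erase x

/-- The list of variables bound by the universal quantifiers of a formula. -/
def FForm.binderList : FForm → List Var
  | .eq _ _ => []
  | .pto _ _ => []
  | .not φ => φ.binderList
  | .or φ ψ => φ.binderList ++ ψ.binderList
  | .wand φ ψ => φ.binderList ++ ψ.binderList
  | .all x φ => x :: φ.binderList

/-- Formulas of propositional separation logic `SL(∗, −∗)` extended with the
atomic predicates `n(x) = n(y)`, `n(x) ↪ n(y)` and `alloc⁻¹(x)`. -/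
inductive TForm : Type
  | eq (x y : Var)
  | pto (x y : Var)
  | emp
  | top
  | nEq (x y : Var)       -- `n(x) = n(y)`
  | nPto (x y : Var)      -- `n(x) ↪ n(y)`
  | allocInv (x : Var)    -- `alloc⁻¹(x)`
  | not (φ : TForm)
  | and (φ ψ : TForm)
  | sep (φ ψ : TForm)
  | wand (φ ψ : TForm)

/-- Simultaneous renaming of the variables of a target formula. -/
def TForm.rename (ρ : Var → Var) : TForm → TForm
  | .eq x y => .eq (ρ x) (ρ y)
  | .pto x y => .pto (ρ x) (ρ y)
  | .emp => .emp
  | .top => .top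
  | .nEq x y => .nEq (ρ x) (ρ y)
  | .nPto x y => .nPto (ρ x) (ρ y)
  | .allocInv x => .allocInv (ρ x)
  | .not φ => .not (φ.rename ρ)
  | .and φ ψ => .and (φ.rename ρ) (ψ.rename ρ)
  | .sep φ ψ => .sep (φ.rename ρ) (ψ.rename ρ)
  | .wand φ ψ => .wand (φ.rename ρ) (ψ.rename ρ)

/-- Falsum `⊥`. -/
def tBot : TForm := .not .top

/-- Disjunction on target formulas. -/
def tOr (φ ψ : TForm) : TForm := .not (.and (.not φ) (.not ψ))

/-- Implication on target formulas. -/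
def tImp (φ ψ : TForm) : TForm := tOr (.not φ) ψ

/-- `alloc(x) := (x ↪ x) −∗ ⊥`. -/
def tAlloc (x : Var) : TForm := .wand (.pto x x) tBot

/-- `size ≥ β`. -/
def tSizeGe : ℕ → TForm
  | 0 => .top
  | β + 1 => .sep (tSizeGe β) (.not .emp)

/-- `size = β`. -/
def tSizeEq (β : ℕ) : TForm := .and (tSizeGe β) (.not (tSizeGe (β + 1)))

/-- Finite conjunction of target formulas. -/
def bigAnd : List TForm → TForm
  | [] => .top
  | φ :: rest => .and φ (bigAnd rest)

/-- The list of variables `x₁, …, x_{2q}` of `X`. -/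
def varsX (q : ℕ) : List Var := (List.range (2 * q)).map (· + 1)

/-- `Safe(X) := (⋀_{distinct x,y ∈ X} x ≠ y) ∧ ⋀_{x ∈ X} ¬alloc⁻¹(x)`. -/
def SafeF (q : ℕ) : TForm :=
  .and
    (bigAnd ((varsX q).flatMap fun x =>
      (varsX q).filterMap fun y =>
        if x = y then none else some (.not (.eq x y))))
    (bigAnd ((varsX q).map fun x => .not (.allocInv x)))

/-- The involution `x_i ↦ x̄_i = x_{i+q}` on `X = {x₁,…,x_{2q}}`. -/
def bar (q : ℕ) (v : Var) : Var :=
  if 1 ≤ v ∧ v ≤ q then v + q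
  else if q + 1 ≤ v ∧ v ≤ 2 * q then v - q
  else v

/-- The translation `T(·, X)` of `FOSL(−∗)` formulas into `SL(∗, −∗)` extended
with `n(x)=n(y)`, `n(x)↪n(y)` and `alloc⁻¹(x)`, where `X = {x₁,…,x_{2q}}`. -/
def T (q : ℕ) : FForm → TForm
  | .eq x y => .nEq x y
  | .pto x y => .nPto x y
  | .not φ => .not (T q φ)
  | .or φ ψ => tOr (T q φ) (T q ψ)
  | .all x φ =>
      .wand (.and (tAlloc x) (tSizeEq 1)) (tImp (SafeF q) (T q φ))
  | .wand φ ψ =>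
      let Z : List Var := (FForm.fv φ).sort (· ≤ ·)
      let Zc : List Var := (varsX q).filter fun v => decide (v ∉ FForm.fv φ)
      .wand
        (.and (bigAnd (Z.map fun z => tAlloc (bar q z)))
          (.and (bigAnd (Zc.map fun z => .not (tAlloc (bar q z))))
            (.and (SafeF q) ((T q φ).rename (bar q)))))
        (tImp
          (.and (bigAnd (Z.map fun z => .nEq z (bar q z))) (SafeF q))
          (.sep (.and (bigAnd (Z.map fun z => tAlloc (bar q z))) (tSizeEq Z.length))
            (T q ψ)))

/-- Satisfaction of `FOSL(−∗)` on (standard) memory states. -/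
def FSat (s : Var → Loc) (h : Heap) : FForm → Prop
  | .eq x y => s x = s y
  | .pto x y => h.f (s x) = some (s y)
  | .not φ => ¬ FSat s h φ
  | .or φ ψ => FSat s h φ ∨ FSat s h ψ
  | .wand φ ψ => ∀ h₁ : Heap, h₁.Disj h → FSat s h₁ φ → FSat s (h.union h₁) ψ
  | .all x φ => ∀ ℓ : Loc, FSat (Function.update s x ℓ) h φ

/-- Satisfaction of the target logic (`SL(∗,−∗)` extended with `n(x)=n(y)`,
`n(x)↪n(y)` and `alloc⁻¹(x)`) on (standard) memory states. -/
def TSat (s : Var → Loc) (h : Heap) : TForm → Prop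
  | .eq x y => s x = s y
  | .pto x y => h.f (s x) = some (s y)
  | .emp => h.dom = ∅
  | .top => True
  | .nEq x y => s x ∈ h.dom ∧ s y ∈ h.dom ∧ h.f (s x) = h.f (s y)
  | .nPto x y => s x ∈ h.dom ∧ s y ∈ h.dom ∧ (h.f (s x)).bind h.f = h.f (s y)
  | .allocInv x => ∃ l : Loc, h.f l = some (s x)
  | .not φ => ¬ TSat s h φ
  | .and φ ψ => TSat s h φ ∧ TSat s h ψ
  | .sep φ ψ => ∃ h₁ h₂ : Heap, h₁.Disj h₂ ∧ h₁.union h₂ = h ∧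
      TSat s h₁ φ ∧ TSat s h₂ ψ
  | .wand φ ψ => ∀ h₁ : Heap, h₁.Disj h → TSat s h₁ φ → TSat s (h.union h₁) ψ

/-- `T_VAL(φ) := ((⋀_{i∈[1,2q]} ¬alloc(x_i)) ∧ Safe(X)) ⇒ T(φ, X)`. -/
def TVAL (q : ℕ) (φ : FForm) : TForm :=
  tImp (.and (bigAnd ((varsX q).map fun i => .not (tAlloc i))) (SafeF q))
    (T q φ)

theorem Heap.ext {h₁ h₂ : Heap} (H : ∀ l, h₁.f l = h₂.f l) : h₁ = h₂ := by
  cases h₁; cases h₂; simp only [Heap.mk.injEq]; exact funext H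

@[simp] theorem Heap.union_f (h₁ h₂ : Heap) (l : Loc) :
    (h₁.union h₂).f l = (h₁.f l).or (h₂.f l) := rfl

theorem Heap.mem_dom {h : Heap} {l : Loc} : l ∈ h.dom ↔ h.f l ≠ none := Iff.rfl

theorem Heap.notMem_dom {h : Heap} {l : Loc} : l ∉ h.dom ↔ h.f l = none := not_not

theorem Heap.dom_finite (h : Heap) : h.dom.Finite := h.fin

theorem Heap.dom_union (h₁ h₂ : Heap) : (h₁.union h₂).dom = h₁.dom ∪ h₂.dom := by
  ext l
  cases h : h₁.f l <;> simp [Heap.mem_dom, h]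

def Heap.ran (h : Heap) : Set Loc := {v | ∃ l, h.f l = some v}

theorem Heap.ran_finite (h : Heap) : h.ran.Finite :=
  (h.fin.image fun l => (h.f l).getD 0).subset fun v ⟨l, hl⟩ => ⟨l, by simp [hl], by simp [hl]⟩

theorem Heap.ran_union_subset (h₁ h₂ : Heap) : (h₁.union h₂).ran ⊆ h₁.ran ∪ h₂.ran := by
  rintro v ⟨l, hl⟩
  cases h : h₁.f l <;> simp only [Heap.union_f, h, Option.none_or, Option.some_or] at hl
  · exact Or.inr ⟨l, hl⟩
  · exact Or.inl ⟨l, h.trans hl⟩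

theorem Heap.Disj.symm {h₁ h₂ : Heap} (hd : h₁.Disj h₂) : h₂.Disj h₁ := fun l => (hd l).symm

theorem Heap.Disj.of_union_right {h₁ h₂ h₃ : Heap} (hd : h₁.Disj (h₂.union h₃)) : h₁.Disj h₂ :=
  fun l => (hd l).imp_right fun h => (Option.or_eq_none_iff.mp h).1

theorem Heap.Disj.union_left {h₁ h₂ h : Heap} (hd₁ : h₁.Disj h) (hd₂ : h₂.Disj h) :
    (h₁.union h₂).Disj h := fun l => by
  rcases hd₁ l with h₁l | hl
  · rcases hd₂ l with h₂l | hl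
    · exact Or.inl (by simp [h₁l, h₂l])
    · exact Or.inr hl
  · exact Or.inr hl

theorem Heap.union_comm {h₁ h₂ : Heap} (hd : h₁.Disj h₂) : h₁.union h₂ = h₂.union h₁ :=
  Heap.ext fun l => by rcases hd l with h | h <;> simp [h]

theorem Heap.union_assoc (h₁ h₂ h₃ : Heap) :
    (h₁.union h₂).union h₃ = h₁.union (h₂.union h₃) :=
  Heap.ext fun l => by simp [Option.or_assoc]

theorem Heap.ncard_dom_union {h₁ h₂ : Heap} (hd : h₁.Disj h₂) :
    (h₁.union h₂).dom.ncard = h₁.dom.ncard + h₂.dom.ncard := by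
  rw [Heap.dom_union]
  exact Set.ncard_union_eq (Set.disjoint_left.mpr fun l h₁l h₂l => by
    rcases hd l with h | h <;> contradiction) h₁.fin h₂.fin

theorem Heap.eq_of_union_eq_union {Ha Hb H₁ H₂ : Heap} (hab : Ha.Disj Hb) (h₁₂ : H₁.Disj H₂)
    (hdom : Ha.dom = H₁.dom) (hU : Ha.union Hb = H₁.union H₂) : Hb = H₂ := by
  refine Heap.ext fun l => ?_
  have hl := congrArg (fun h : Heap => h.f l) hU
  by_cases ha : l ∈ Ha.dom
  · have h₁ : l ∈ H₁.dom := hdom ▸ ha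
    rw [(hab l).resolve_left ha, (h₁₂ l).resolve_left h₁]
  · have h₁ : l ∉ H₁.dom := hdom ▸ ha
    simpa [Heap.notMem_dom.mp ha, Heap.notMem_dom.mp h₁] using hl

open scoped Classical in
noncomputable def Heap.single (l v : Loc) : Heap where
  f := fun l' => if l' = l then some v else none
  fin := (Set.finite_singleton l).subset fun l' hl' => by
    by_contra h
    exact hl' (if_neg h)

open scoped Classical in
@[simp] theorem Heap.single_f (l v l' : Loc) :
    (Heap.single l v).f l' = if l' = l then some v else none := rfl

theorem Heap.dom_single (l v : Loc) : (Heap.single l v).dom = {l} := by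
  ext l'
  by_cases h : l' = l <;> simp [Heap.mem_dom, h]

theorem Heap.ran_single (l v : Loc) : (Heap.single l v).ran = {v} := by
  ext v'
  simp only [Heap.ran, Heap.single_f, Set.mem_singleton_iff]
  constructor
  · rintro ⟨l', hl'⟩
    split_ifs at hl' with h
    exact (Option.some.inj hl').symm
  · rintro rfl
    exact ⟨l, by simp⟩

theorem Heap.single_disj {h : Heap} {l : Loc} (hl : h.f l = none) (v : Loc) :
    (Heap.single l v).Disj h := fun l' => by
  by_cases h' : l' = l
  · exact Or.inr (h' ▸ hl)
  · exact Or.inl (by simp [h'])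

open scoped Classical in
noncomputable def Heap.restrict (h : Heap) (p : Loc → Prop) : Heap where
  f := fun l => if p l then h.f l else none
  fin := h.fin.subset fun l hl => by
    by_cases hp : p l
    · simpa [hp] using hl
    · exact absurd (if_neg hp) hl

open scoped Classical in
@[simp] theorem Heap.restrict_f (h : Heap) (p : Loc → Prop) (l : Loc) :
    (h.restrict p).f l = if p l then h.f l else none := rfl

theorem Heap.ran_restrict_subset (h : Heap) (p : Loc → Prop) : (h.restrict p).ran ⊆ h.ran := by
  rintro v ⟨l, hl⟩
  by_cases hp : p l
  · exact ⟨l, by simpa [hp] using hl⟩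
  · simp [hp] at hl

theorem Heap.restrict_union_single {h : Heap} {l v : Loc} (hl : h.f l = some v) :
    (h.restrict (· ≠ l)).union (Heap.single l v) = h :=
  Heap.ext fun l' => by by_cases h' : l' = l <;> simp [h', hl]

theorem Heap.restrict_disj_single (h : Heap) (l v : Loc) :
    (h.restrict (· ≠ l)).Disj (Heap.single l v) := fun l' => by
  by_cases h' : l' = l <;> simp [h']

theorem Heap.dom_restrict_ne (h : Heap) (l : Loc) :
    (h.restrict (· ≠ l)).dom = h.dom \ {l} := by
  ext l'
  by_cases h' : l' = l <;> simp [Heap.mem_dom, h']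

noncomputable def Heap.perm (h : Heap) (π : Equiv.Perm Loc) : Heap where
  f := fun l => (h.f (π.symm l)).map π
  fin := (h.fin.image π).subset fun l hl =>
    ⟨π.symm l, fun h' => hl (by simp [h']), π.apply_symm_apply l⟩

@[simp] theorem Heap.perm_f (h : Heap) (π : Equiv.Perm Loc) (l : Loc) :
    (h.perm π).f l = (h.f (π.symm l)).map π := rfl

theorem Heap.perm_union (h₁ h₂ : Heap) (π : Equiv.Perm Loc) :
    (h₁.union h₂).perm π = (h₁.perm π).union (h₂.perm π) :=
  Heap.ext fun l => by
    simp only [Heap.perm_f, Heap.union_f]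
    cases h₁.f (π.symm l) <;> simp

theorem Heap.Disj.perm {h₁ h₂ : Heap} (hd : h₁.Disj h₂) (π : Equiv.Perm Loc) :
    (h₁.perm π).Disj (h₂.perm π) := fun l => by
  rcases hd (π.symm l) with h | h <;> simp [h]

theorem Heap.perm_perm_symm (h : Heap) (π : Equiv.Perm Loc) : (h.perm π).perm π.symm = h :=
  Heap.ext fun l => by
    simp only [Heap.perm_f, Equiv.symm_symm, Equiv.symm_apply_apply]
    cases h.f l <;> simp

theorem Heap.perm_symm_perm (h : Heap) (π : Equiv.Perm Loc) : (h.perm π.symm).perm π = h := by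
  simpa using h.perm_perm_symm π.symm

theorem Heap.dom_perm (h : Heap) (π : Equiv.Perm Loc) : (h.perm π).dom = π '' h.dom := by
  ext l
  rw [← π.apply_symm_apply l, Set.mem_image_equiv]
  simp [Heap.mem_dom]

theorem Heap.ran_perm (h : Heap) (π : Equiv.Perm Loc) : (h.perm π).ran = π '' h.ran := by
  ext v
  simp only [Heap.ran, Heap.perm_f, Set.mem_image, Set.mem_ofPred_eq, Option.map_eq_some_iff]
  constructor
  · rintro ⟨l, w, hw, rfl⟩
    exact ⟨w, ⟨_, hw⟩, rfl⟩
  · rintro ⟨w, ⟨l, hl⟩, rfl⟩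
    exact ⟨π l, w, by simpa using hl, rfl⟩

theorem Heap.perm_eq_self {h : Heap} {π : Equiv.Perm Loc}
    (hπ : ∀ l ∈ h.dom ∪ h.ran, π l = l) : h.perm π = h := by
  refine Heap.ext fun l => ?_
  by_cases hl : π.symm l ∈ h.dom
  · have hfix : π.symm l = l := by simpa using (hπ _ (Or.inl hl)).symm
    obtain ⟨v, hv⟩ := Option.ne_none_iff_exists'.mp (hfix ▸ hl : l ∈ h.dom)
    rw [Heap.perm_f, hfix, hv, Option.map_some, hπ v (Or.inr ⟨l, hv⟩)]
  · have hl' : l ∉ h.dom := fun h' => hl (by rwa [← hπ l (Or.inl h'), π.symm_apply_apply])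
    rw [Heap.perm_f, Heap.notMem_dom.mp hl, Heap.notMem_dom.mp hl', Option.map_none]

def Heap.Avoids (h : Heap) (S : Set Loc) : Prop := Disjoint h.dom S ∧ Disjoint h.ran S

theorem Heap.Avoids.apply_eq_none {h : Heap} {S : Set Loc} (ha : h.Avoids S) {l : Loc}
    (hl : l ∈ S) : h.f l = none :=
  Heap.notMem_dom.mp fun hd => Set.disjoint_left.mp ha.1 hd hl

theorem Heap.Avoids.apply_ne_some {h : Heap} {S : Set Loc} (ha : h.Avoids S) {v : Loc}
    (hv : v ∈ S) (l : Loc) : h.f l ≠ some v :=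
  fun e => Set.disjoint_left.mp ha.2 ⟨l, e⟩ hv

theorem Heap.Avoids.ne_of_mem {h : Heap} {S : Set Loc} (ha : h.Avoids S) {l ℓ : Loc}
    (hl : l ∈ h.dom ∪ h.ran) (hℓ : ℓ ∈ S) : l ≠ ℓ := by
  rintro rfl
  rcases hl with hl | hl
  · exact Set.disjoint_left.mp ha.1 hl hℓ
  · exact Set.disjoint_left.mp ha.2 hl hℓ

theorem Heap.avoids_perm {h : Heap} {S : Set Loc} {π : Equiv.Perm Loc}
    (hπ : ∀ l ∈ h.dom ∪ h.ran, π l ∉ S) : (h.perm π).Avoids S := by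
  rw [Heap.Avoids, Heap.dom_perm, Heap.ran_perm]
  exact ⟨Set.disjoint_left.mpr fun _ ⟨l, hl, e⟩ => e ▸ hπ l (Or.inl hl),
    Set.disjoint_left.mpr fun _ ⟨l, hl, e⟩ => e ▸ hπ l (Or.inr hl)⟩

theorem Heap.Avoids.union {h₁ h₂ : Heap} {S : Set Loc} (ha₁ : h₁.Avoids S) (ha₂ : h₂.Avoids S) :
    (h₁.union h₂).Avoids S :=
  ⟨Heap.dom_union h₁ h₂ ▸ Set.disjoint_union_left.mpr ⟨ha₁.1, ha₂.1⟩,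
    Set.disjoint_of_subset_left (Heap.ran_union_subset _ _)
      (Set.disjoint_union_left.mpr ⟨ha₁.2, ha₂.2⟩)⟩

theorem exists_perm_fix_moveOff {S F D : Set Loc} (hS : S.Finite) (hF : F.Finite)
    (hD : D.Finite) (hSF : Disjoint S F) :
    ∃ π : Equiv.Perm Loc, (∀ l ∈ F, π l = l) ∧ ∀ l ∈ D, π l ∉ S := by
  induction S, hS using Set.Finite.induction_on with
  | empty => exact ⟨1, fun _ _ => rfl, fun _ _ h => h⟩
  | @insert a S _ hS ih =>
    obtain ⟨π, hπF, hπD⟩ := ih (Set.disjoint_of_subset_left (Set.subset_insert a S) hSF)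
    have haF : a ∉ F := Set.disjoint_left.mp hSF (Set.mem_insert a S)
    obtain ⟨t, ht⟩ := (((hF.union hS).insert a).union (hD.image π)).exists_notMem
    simp only [Set.mem_union, Set.mem_insert_iff, Set.mem_image, not_or, not_exists,
      not_and] at ht
    obtain ⟨⟨hta, htF, htS⟩, htD⟩ := ht
    refine ⟨π.trans (Equiv.swap a t), fun l hl => ?_, fun l hl => ?_⟩
    · rw [Equiv.trans_apply, hπF l hl,
        Equiv.swap_apply_of_ne_of_ne (ne_of_mem_of_not_mem hl haF) (ne_of_mem_of_not_mem hl htF)]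
    · rw [Equiv.trans_apply]
      by_cases hla : π l = a
      · rw [hla, Equiv.swap_apply_left]
        simp [hta, htS]
      · rw [Equiv.swap_apply_of_ne_of_ne hla fun h => htD l hl h]
        simp [hla, hπD l hl]

open scoped Classical in
noncomputable def cells (B : Finset Var) (t σ : Var → Loc) : Heap where
  f := fun l => if l ∈ t '' B then some (σ (Function.invFunOn t B l)) else none
  fin := (B.finite_toSet.image t).subset fun l hl => by
    by_contra h
    exact hl (if_neg h)

open scoped Classical in
theorem cells_f (B : Finset Var) (t σ : Var → Loc) (l : Loc) :
    (cells B t σ).f l = if l ∈ t '' B then some (σ (Function.invFunOn t B l)) else none := rfl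

theorem cells_apply {B : Finset Var} {t : Var → Loc} (σ : Var → Loc) (ht : Set.InjOn t B)
    {x : Var} (hx : x ∈ B) : (cells B t σ).f (t x) = some (σ x) := by
  rw [cells_f, if_pos (Set.mem_image_of_mem t hx), ht.leftInvOn_invFunOn hx]

theorem cells_apply_of_notMem {B : Finset Var} {t : Var → Loc} (σ : Var → Loc) {l : Loc}
    (hl : l ∉ t '' B) : (cells B t σ).f l = none := by
  rw [cells_f, if_neg hl]

theorem dom_cells (B : Finset Var) (t σ : Var → Loc) : (cells B t σ).dom = t '' B := by
  ext l
  by_cases hl : l ∈ t '' B <;> simp [Heap.mem_dom, cells_f, hl]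

theorem TSat_tBot (s : Var → Loc) (h : Heap) : ¬ TSat s h tBot := by
  simp [tBot, TSat]

theorem TSat_tOr (s : Var → Loc) (h : Heap) (φ ψ : TForm) :
    TSat s h (tOr φ ψ) ↔ TSat s h φ ∨ TSat s h ψ := by
  simp only [tOr, TSat]; tauto

theorem TSat_tImp (s : Var → Loc) (h : Heap) (φ ψ : TForm) :
    TSat s h (tImp φ ψ) ↔ (TSat s h φ → TSat s h ψ) := by
  simp only [tImp, tOr, TSat]; tauto

theorem TSat_tAlloc (s : Var → Loc) (h : Heap) (x : Var) :
    TSat s h (tAlloc x) ↔ s x ∈ h.dom := by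
  refine ⟨fun H => by_contra fun hx => ?_, fun hx h₁ hd hpto => ?_⟩
  · exact TSat_tBot s _ (H _ (Heap.single_disj (Heap.notMem_dom.mp hx) (s x)) (by simp [TSat]))
  · have hpto : h₁.f (s x) = some (s x) := hpto
    rcases hd (s x) with h' | h'
    · simp [h'] at hpto
    · exact absurd h' hx

theorem TSat_bigAnd (s : Var → Loc) (h : Heap) (L : List TForm) :
    TSat s h (bigAnd L) ↔ ∀ φ ∈ L, TSat s h φ := by
  induction L with
  | nil => simp [bigAnd, TSat]
  | cons a L ih => simp [bigAnd, TSat, ih]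

theorem TSat_bigAnd_map {α : Type*} (s : Var → Loc) (h : Heap) (F : α → TForm) (L : List α) :
    TSat s h (bigAnd (L.map F)) ↔ ∀ a ∈ L, TSat s h (F a) := by
  simp [TSat_bigAnd]

theorem TSat_tSizeGe (s : Var → Loc) (n : ℕ) (h : Heap) :
    TSat s h (tSizeGe n) ↔ n ≤ h.dom.ncard := by
  induction n generalizing h with
  | zero => simp [tSizeGe, TSat]
  | succ n ih =>
    simp only [tSizeGe, TSat, ih]
    constructor
    · rintro ⟨h₁, h₂, hd, rfl, hn, hne⟩
      have : 0 < h₂.dom.ncard := (Set.ncard_pos h₂.fin).mpr (Set.nonempty_iff_ne_empty.mpr hne)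
      rw [Heap.ncard_dom_union hd]
      omega
    · intro hn
      obtain ⟨l, hl⟩ := Set.nonempty_of_ncard_ne_zero (s := h.dom) (by omega)
      obtain ⟨v, hv⟩ := Option.ne_none_iff_exists'.mp hl
      refine ⟨_, _, Heap.restrict_disj_single h l v, Heap.restrict_union_single hv, ?_, ?_⟩
      · rw [Heap.dom_restrict_ne, Set.ncard_sdiff_singleton_of_mem hl]
        omega
      · simp [Heap.dom_single]

theorem TSat_tSizeEq (s : Var → Loc) (n : ℕ) (h : Heap) :
    TSat s h (tSizeEq n) ↔ h.dom.ncard = n := by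
  simp only [tSizeEq, TSat, TSat_tSizeGe]
  omega

theorem TSat_tAlloc_and_tSizeEq_one (s : Var → Loc) (h : Heap) (x : Var) :
    TSat s h (tAlloc x) ∧ TSat s h (tSizeEq 1) ↔ ∃ ℓ, h = Heap.single (s x) ℓ := by
  simp only [TSat_tAlloc, TSat_tSizeEq]
  constructor
  · rintro ⟨hx, hsize⟩
    obtain ⟨a, ha⟩ := Set.ncard_eq_one.mp hsize
    obtain ⟨ℓ, hℓ⟩ := Option.ne_none_iff_exists'.mp hx
    refine ⟨ℓ, Heap.ext fun l => ?_⟩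
    by_cases hl : l = s x
    · simp [hl, hℓ]
    · rw [ha, Set.mem_singleton_iff] at hx
      have : l ∉ h.dom := by rwa [ha, Set.mem_singleton_iff, ← hx]
      simp [hl, Heap.notMem_dom.mp this]
  · rintro ⟨ℓ, rfl⟩
    simp [Heap.dom_single]

theorem TSat_rename (s : Var → Loc) (h : Heap) (ρ : Var → Var) (φ : TForm) :
    TSat s h (φ.rename ρ) ↔ TSat (s ∘ ρ) h φ := by
  induction φ generalizing h <;> simp_all [TForm.rename, TSat]

theorem mem_varsX {q v : ℕ} : v ∈ varsX q ↔ v ∈ Set.Icc 1 (2 * q) := by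
  simp only [varsX, List.mem_map, List.mem_range, Set.mem_Icc]
  constructor
  · rintro ⟨i, hi, rfl⟩; omega
  · intro ⟨h1, h2⟩; exact ⟨v - 1, by omega, by omega⟩

def storeLocs (q : ℕ) (s : Var → Loc) : Set Loc := s '' Set.Icc 1 (2 * q)

theorem storeLocs_finite (q : ℕ) (s : Var → Loc) : (storeLocs q s).Finite :=
  (Set.finite_Icc 1 (2 * q)).image s

theorem TSat_SafeF (s : Var → Loc) (h : Heap) (q : ℕ) :
    TSat s h (SafeF q) ↔ Set.InjOn s (Set.Icc 1 (2 * q)) ∧ Disjoint h.ran (storeLocs q s) := by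
  simp only [SafeF, TSat, TSat_bigAnd, List.mem_flatMap, List.mem_filterMap,
    mem_varsX]
  refine and_congr ⟨fun H i hi j hj hij => ?_, fun H φ ⟨i, hi, j, hj, hφ⟩ => ?_⟩ ?_
  · by_contra hne
    exact H (.not (.eq i j)) ⟨i, hi, j, hj, by simp [hne]⟩ hij
  · split_ifs at hφ with hij
    cases hφ
    exact fun e => hij (H hi hj e)
  · simp only [storeLocs, Set.disjoint_right, Set.forall_mem_image, List.forall_mem_map, TSat,
      mem_varsX]
    rfl

theorem bar_of_le {q v : ℕ} (h1 : 1 ≤ v) (h2 : v ≤ q) : bar q v = v + q := by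
  simp [bar, h1, h2]

theorem bar_of_gt {q v : ℕ} (h1 : q < v) (h2 : v ≤ 2 * q) : bar q v = v - q := by
  simp [bar, h2, Nat.not_le.mpr h1, Nat.succ_le_of_lt h1]

-- `omega` does not see through the abbreviation `Var`, hence the `unfold Var` below.
theorem bar_mapsTo (q : ℕ) : Set.MapsTo (bar q) (Set.Icc 1 (2 * q)) (Set.Icc 1 (2 * q)) := by
  intro v ⟨h1, h2⟩
  unfold Var at *
  rcases le_or_gt v q with h | h
  · rw [bar_of_le h1 h]; constructor <;> omega
  · rw [bar_of_gt h h2]; constructor <;> omega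

theorem bar_bar {q v : ℕ} (hv : v ∈ Set.Icc 1 (2 * q)) : bar q (bar q v) = v := by
  obtain ⟨h1, h2⟩ := hv
  unfold Var
  rcases le_or_gt v q with h | h
  · rw [bar_of_le h1 h, bar_of_gt (by omega) (by omega)]; omega
  · rw [bar_of_gt h h2, bar_of_le (by omega) (by omega)]; omega

theorem bar_injOn (q : ℕ) : Set.InjOn (bar q) (Set.Icc 1 (2 * q)) :=
  fun v hv w hw e => by rw [← bar_bar hv, e, bar_bar hw]

theorem bar_image (q : ℕ) : bar q '' Set.Icc 1 (2 * q) = Set.Icc 1 (2 * q) :=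
  (bar_mapsTo q).image_subset.antisymm fun v hv => ⟨bar q v, bar_mapsTo q hv, bar_bar hv⟩

theorem bar_notMem {q : ℕ} {A : Finset Var} (hA : A ⊆ Finset.Icc 1 q) {z : Var}
    (hz : z ∈ Finset.Icc 1 q) : bar q z ∉ A := fun h => by
  have h₁ := Finset.mem_Icc.mp (hA h)
  have h₂ := Finset.mem_Icc.mp hz
  rw [bar_of_le h₂.1 h₂.2] at h₁
  unfold Var at *
  omega

theorem mem_Icc_double {q x : ℕ} (hx : x ∈ Finset.Icc 1 q) : x ∈ Set.Icc 1 (2 * q) := by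
  have := Finset.mem_Icc.mp hx
  exact ⟨this.1, by omega⟩

theorem storeLocs_comp_bar (q : ℕ) (s : Var → Loc) : storeLocs q (s ∘ bar q) = storeLocs q s := by
  rw [storeLocs, Set.image_comp, bar_image, storeLocs]

theorem Set.InjOn.comp_bar {q : ℕ} {s : Var → Loc} (hs : Set.InjOn s (Set.Icc 1 (2 * q))) :
    Set.InjOn (s ∘ bar q) (Set.Icc 1 (2 * q)) :=
  hs.comp (bar_injOn q) (bar_mapsTo q)

theorem FSat_congr_eqOn {φ : FForm} {σ σ' : Var → Loc} (h : Heap)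
    (H : Set.EqOn σ σ' φ.fv) : FSat σ h φ ↔ FSat σ' h φ := by
  induction φ generalizing σ σ' h with
  | eq x y | pto x y =>
    simp only [FForm.fv, Finset.coe_insert, Finset.coe_singleton] at H
    simp only [FSat, H (Set.mem_insert x _), H (Set.mem_insert_of_mem x rfl)]
  | not φ ih => exact not_congr (ih h H)
  | or φ ψ ih₁ ih₂ =>
    simp only [FForm.fv, Finset.coe_union] at H
    exact or_congr (ih₁ h (H.mono Set.subset_union_left)) (ih₂ h (H.mono Set.subset_union_right))
  | wand φ ψ ih₁ ih₂ =>
    simp only [FForm.fv, Finset.coe_union] at H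
    exact forall_congr' fun h₁ => imp_congr_right fun _ =>
      imp_congr (ih₁ h₁ (H.mono Set.subset_union_left)) (ih₂ _ (H.mono Set.subset_union_right))
  | all x φ ih =>
    refine forall_congr' fun ℓ => ih h fun y hy => ?_
    by_cases hyx : y = x
    · simp [hyx]
    · simpa [hyx] using H (by simp [FForm.fv, hyx, hy])

theorem FSat_perm (π : Equiv.Perm Loc) {φ : FForm} {σ : Var → Loc} {h : Heap} :
    FSat (π ∘ σ) (h.perm π) φ ↔ FSat σ h φ := by
  induction φ generalizing σ h with
  | eq x y => exact π.injective.eq_iff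
  | pto x y => simp [FSat]
  | not φ ih => exact not_congr ih
  | or φ ψ ih₁ ih₂ => exact or_congr ih₁ ih₂
  | wand φ ψ ih₁ ih₂ =>
    simp only [FSat]
    constructor
    · intro W h₁ hd hs
      exact ih₂.mp (Heap.perm_union h h₁ π ▸ W _ (hd.perm π) (ih₁.mpr hs))
    · intro W h₁ hd hs
      have hd' := hd.perm π.symm
      rw [Heap.perm_perm_symm] at hd'
      have := ih₂.mpr (W _ hd' (ih₁.mp ((h₁.perm_symm_perm π).symm ▸ hs)))
      rwa [Heap.perm_union, Heap.perm_symm_perm] at this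
  | all x φ ih =>
    have hupd : ∀ ℓ, Function.update (π ∘ σ) x (π ℓ) = π ∘ Function.update σ x ℓ :=
      fun ℓ => (Function.comp_update π σ x ℓ).symm
    refine ⟨fun W ℓ => ih.mp (hupd ℓ ▸ W (π ℓ)), fun W ℓ => ?_⟩
    simpa [← hupd] using ih.mpr (W (π.symm ℓ))

theorem FSat_iff_of_perm_eq_self {π : Equiv.Perm Loc} {h : Heap} (hπ : h.perm π = h)
    {φ : FForm} {σ σ' : Var → Loc} (H : Set.EqOn (π ∘ σ) σ' φ.fv) :
    FSat σ h φ ↔ FSat σ' h φ := by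
  rw [← FSat_perm π, hπ, FSat_congr_eqOn h H]

-- A value in `S` is traded for a fresh location by a transposition, which fixes `h` and the
-- other free variables.
theorem FSat_all_iff_forall_notMem {S : Set Loc} (hS : S.Finite) {h : Heap} (hh : h.Avoids S)
    {σ : Var → Loc} {x : Var} {φ : FForm} (hσ : ∀ y ∈ (FForm.all x φ).fv, σ y ∉ S) :
    FSat σ h (.all x φ) ↔ ∀ ℓ ∉ S, FSat (Function.update σ x ℓ) h φ := by
  refine ⟨fun H ℓ _ => H ℓ, fun H ℓ => ?_⟩
  by_cases hℓ : ℓ ∈ S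
  swap
  · exact H ℓ hℓ
  obtain ⟨ℓ', hℓ'⟩ := (((hS.union h.dom_finite).union h.ran_finite).union
    ((FForm.all x φ).fv.finite_toSet.image σ)).exists_notMem
  simp only [Set.mem_union, Set.mem_image, Finset.mem_coe, not_or, not_exists, not_and] at hℓ'
  obtain ⟨⟨⟨hℓ'S, hℓ'dom⟩, hℓ'ran⟩, hℓ'σ⟩ := hℓ'
  refine (FSat_iff_of_perm_eq_self (π := Equiv.swap ℓ ℓ') ?_ fun y hy => ?_).mp (H ℓ' hℓ'S)
  · refine Heap.perm_eq_self fun l hl => Equiv.swap_apply_of_ne_of_ne (hh.ne_of_mem hl hℓ) ?_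
    rintro rfl
    exact hl.elim hℓ'dom hℓ'ran
  · by_cases hyx : y = x
    · simp [hyx]
    · have hy' : y ∈ (FForm.all x φ).fv := Finset.mem_erase.mpr ⟨hyx, hy⟩
      have hne : σ y ≠ ℓ := fun e => hσ y hy' (e ▸ hℓ)
      simpa [hyx] using Equiv.swap_apply_of_ne_of_ne hne (hℓ'σ y hy')

-- A permutation fixing `h` and the free variables moves any extension off `S`.
theorem FSat_wand_iff_forall_avoids {S : Set Loc} (hS : S.Finite) {h : Heap} (hh : h.Avoids S)
    {σ : Var → Loc} {φ ψ : FForm} (hσ : ∀ y ∈ (FForm.wand φ ψ).fv, σ y ∉ S) :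
    FSat σ h (.wand φ ψ) ↔
      ∀ h₁ : Heap, h₁.Avoids S → h₁.Disj h → FSat σ h₁ φ → FSat σ (h.union h₁) ψ := by
  refine ⟨fun H h₁ _ => H h₁, fun H h₁ hd hφ => ?_⟩
  have hSF : Disjoint S (h.dom ∪ h.ran ∪ σ '' (FForm.wand φ ψ).fv) := by
    refine Set.disjoint_right.mpr fun l hl hlS => ?_
    rcases hl with hl | ⟨y, hy, rfl⟩
    · exact hh.ne_of_mem hl hlS rfl
    · exact hσ y hy hlS
  obtain ⟨π, hπF, hπD⟩ := exists_perm_fix_moveOff hS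
    ((h.dom_finite.union h.ran_finite).union ((FForm.wand φ ψ).fv.finite_toSet.image σ))
    (h₁.dom_finite.union h₁.ran_finite) hSF
  have hπh : h.perm π = h := Heap.perm_eq_self fun l hl => hπF l (Or.inl hl)
  have hπσ : ∀ χ : FForm, χ.fv ⊆ (FForm.wand φ ψ).fv → Set.EqOn (π ∘ σ) σ χ.fv :=
    fun χ hχ y hy => hπF _ (Or.inr ⟨y, hχ hy, rfl⟩)
  have hφ' : FSat σ (h₁.perm π) φ :=
    (FSat_congr_eqOn _ (hπσ φ Finset.subset_union_left)).mp ((FSat_perm π).mpr hφ)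
  have hψ := H (h₁.perm π) (Heap.avoids_perm hπD) (hπh ▸ hd.perm π) hφ'
  rw [← hπh, ← Heap.perm_union] at hψ
  exact (FSat_perm π).mp ((FSat_congr_eqOn _ (hπσ ψ Finset.subset_union_right)).mpr hψ)

theorem TSat_T_all_iff {s : Var → Loc} {h : Heap} {q : ℕ} {x : Var} {φ : FForm}
    (hx : h.f (s x) = none) :
    TSat s h (T q (.all x φ)) ↔ ∀ ℓ, TSat s (h.union (Heap.single (s x) ℓ)) (SafeF q) →
      TSat s (h.union (Heap.single (s x) ℓ)) (T q φ) := by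
  simp only [T, TSat, TSat_tAlloc_and_tSizeEq_one, TSat_tImp]
  exact ⟨fun H ℓ => H _ (Heap.single_disj hx ℓ) ⟨ℓ, rfl⟩, fun H _ _ ⟨ℓ, hℓ⟩ => hℓ ▸ H ℓ⟩

theorem TSat_T_wand {s : Var → Loc} {h : Heap} {q : ℕ} {φ ψ : FForm} :
    TSat s h (T q (.wand φ ψ)) ↔ ∀ h₁ : Heap, h₁.Disj h →
      (∀ z ∈ φ.fv, s (bar q z) ∈ h₁.dom) →
      (∀ v ∈ Set.Icc 1 (2 * q), v ∉ φ.fv → s (bar q v) ∉ h₁.dom) →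
      TSat s h₁ (SafeF q) → TSat (s ∘ bar q) h₁ (T q φ) →
      (∀ z ∈ φ.fv, s z ∈ (h.union h₁).dom ∧ s (bar q z) ∈ (h.union h₁).dom ∧
        (h.union h₁).f (s z) = (h.union h₁).f (s (bar q z))) →
      TSat s (h.union h₁) (SafeF q) →
      ∃ Ha Hb : Heap, Ha.Disj Hb ∧ Ha.union Hb = h.union h₁ ∧
        (∀ z ∈ φ.fv, s (bar q z) ∈ Ha.dom) ∧ Ha.dom.ncard = φ.fv.card ∧ TSat s Hb (T q ψ) := by
  simp only [T, TSat, TSat_bigAnd_map, TSat_tImp, TSat_tAlloc, TSat_tSizeEq, TSat_rename,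
    Finset.mem_sort, Finset.length_sort, List.mem_filter, mem_varsX, decide_eq_true_eq,
    and_imp, and_assoc]

/-- The store of the `FOSL` state `(σ, hp)` is kept in the heap `h`: an active variable `x ∈ A`
names the dedicated cell `s x`, whose content is `σ x`, so that `x = y` becomes
`n(x) = n(y)`. -/
structure Encodes (q : ℕ) (s : Var → Loc) (A : Finset Var) (σ : Var → Loc) (hp h : Heap) :
    Prop where
  injOn : Set.InjOn s (Set.Icc 1 (2 * q))
  subset : A ⊆ Finset.Icc 1 q
  apply_active : ∀ x ∈ A, h.f (s x) = some (σ x)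
  apply_inactive : ∀ i ∈ Set.Icc 1 (2 * q), i ∉ A → h.f (s i) = none
  apply_of_notMem : ∀ l ∉ storeLocs q s, h.f l = hp.f l
  avoids : hp.Avoids (storeLocs q s)
  store_notMem : ∀ x ∈ A, σ x ∉ storeLocs q s

namespace Encodes

variable {q : ℕ} {s σ : Var → Loc} {A : Finset Var} {hp h : Heap}

theorem mem_Icc (E : Encodes q s A σ hp h) {x : Var} (hx : x ∈ A) : x ∈ Set.Icc 1 (2 * q) :=
  mem_Icc_double (E.subset hx)

theorem ran_disjoint (E : Encodes q s A σ hp h) : Disjoint h.ran (storeLocs q s) := by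
  refine Set.disjoint_left.mpr fun v ⟨l, hl⟩ hv => ?_
  by_cases hlS : l ∈ storeLocs q s
  · obtain ⟨i, hi, rfl⟩ := hlS
    by_cases hiA : i ∈ A
    · rw [E.apply_active i hiA, Option.some.injEq] at hl
      exact E.store_notMem i hiA (hl ▸ hv)
    · simp [E.apply_inactive i hi hiA] at hl
  · rw [E.apply_of_notMem l hlS] at hl
    exact E.avoids.apply_ne_some hv l hl

theorem TSat_nEq_iff (E : Encodes q s A σ hp h) {x y : Var} (hx : x ∈ A) (hy : y ∈ A) :
    TSat s h (.nEq x y) ↔ σ x = σ y := by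
  simp [TSat, Heap.mem_dom, E.apply_active x hx, E.apply_active y hy]

theorem TSat_nPto_iff (E : Encodes q s A σ hp h) {x y : Var} (hx : x ∈ A) (hy : y ∈ A) :
    TSat s h (.nPto x y) ↔ hp.f (σ x) = some (σ y) := by
  simp [TSat, Heap.mem_dom, E.apply_active x hx, E.apply_active y hy,
    E.apply_of_notMem _ (E.store_notMem x hx)]

theorem update (E : Encodes q s A σ hp h) {x : Var} (hx : x ∈ Finset.Icc 1 q) (hxA : x ∉ A)
    {ℓ : Loc} (hℓ : ℓ ∉ storeLocs q s) :
    Encodes q s (insert x A) (Function.update σ x ℓ) hp (h.union (Heap.single (s x) ℓ)) := by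
  have hxS : s x ∈ storeLocs q s := Set.mem_image_of_mem s (mem_Icc_double hx)
  refine ⟨E.injOn, Finset.insert_subset hx E.subset, fun y hy => ?_, fun i hi hiA => ?_,
    fun l hl => ?_, E.avoids, fun y hy => ?_⟩
  · rcases Finset.mem_insert.mp hy with rfl | hyA
    · simp [E.apply_inactive y (mem_Icc_double hx) hxA]
    · have hyx : y ≠ x := fun e => hxA (e ▸ hyA)
      simp [E.apply_active y hyA, hyx]
  · have hix : s i ≠ s x := fun e =>
      hiA (E.injOn hi (mem_Icc_double hx) e ▸ Finset.mem_insert_self x A)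
    simp [E.apply_inactive i hi fun h => hiA (Finset.mem_insert_of_mem h), hix]
  · have hlx : l ≠ s x := fun e => hl (e ▸ hxS)
    simp [E.apply_of_notMem l hl, hlx]
  · rcases Finset.mem_insert.mp hy with rfl | hyA
    · simpa using hℓ
    · have hyx : y ≠ x := fun e => hxA (e ▸ hyA)
      simpa [hyx] using E.store_notMem y hyA

theorem mem_dom (E : Encodes q s A σ hp h) {x : Var} (hx : x ∈ A) : s x ∈ h.dom := by
  simp [Heap.mem_dom, E.apply_active x hx]

theorem safe_union_single_iff (E : Encodes q s A σ hp h) {x : Var}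
    (hx : x ∈ Set.Icc 1 (2 * q)) (hxA : x ∉ A) {ℓ : Loc} :
    TSat s (h.union (Heap.single (s x) ℓ)) (SafeF q) ↔ ℓ ∉ storeLocs q s := by
  rw [TSat_SafeF]
  constructor
  · rintro ⟨-, hdisj⟩ hℓ
    exact Set.disjoint_left.mp hdisj ⟨s x, by simp [E.apply_inactive x hx hxA]⟩ hℓ
  · refine fun hℓ => ⟨E.injOn, Set.disjoint_of_subset_left (Heap.ran_union_subset _ _) ?_⟩
    rw [Heap.ran_single, Set.disjoint_union_left, Set.disjoint_singleton_left]
    exact ⟨E.ran_disjoint, hℓ⟩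

theorem disj_of_avoids (E : Encodes q s A σ hp h) {h₁ : Heap} (ha : h₁.Avoids (storeLocs q s))
    (hd : h₁.Disj hp) : h₁.Disj h := fun l => by
  by_cases hl : l ∈ storeLocs q s
  · exact Or.inl (ha.apply_eq_none hl)
  · rw [E.apply_of_notMem l hl]
    exact hd l

theorem union_of_avoids (E : Encodes q s A σ hp h) {h₁ : Heap} (ha : h₁.Avoids (storeLocs q s)) :
    Encodes q s A σ (hp.union h₁) (h.union h₁) := by
  refine ⟨E.injOn, E.subset, fun x hx => by simp [E.apply_active x hx], fun i hi hiA => ?_,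
    fun l hl => by simp [E.apply_of_notMem l hl], E.avoids.union ha, E.store_notMem⟩
  simp [E.apply_inactive i hi hiA, ha.apply_eq_none (Set.mem_image_of_mem s hi)]

theorem bar_cells_union (E : Encodes q s A σ hp h) {B : Finset Var} (hB : B ⊆ A) {h₁ : Heap}
    (ha : h₁.Avoids (storeLocs q s)) :
    Encodes q (s ∘ bar q) B σ h₁ ((cells B (s ∘ bar q) σ).union h₁) := by
  have hBX : (B : Set Var) ⊆ Set.Icc 1 (2 * q) := fun z hz => E.mem_Icc (hB hz)
  have hinj := Set.InjOn.comp_bar E.injOn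
  have hS := storeLocs_comp_bar q s
  refine ⟨hinj, hB.trans E.subset, fun z hz => by
      rw [Heap.union_f, cells_apply σ (hinj.mono hBX) hz, Option.some_or],
    fun i hi hiB => ?_, fun l hl => ?_, hS ▸ ha, fun z hz => hS ▸ E.store_notMem z (hB hz)⟩
  · have hC := cells_apply_of_notMem σ (mt (hinj.mem_image_iff hBX hi).mp hiB)
    have hiS : (s ∘ bar q) i ∈ storeLocs q (s ∘ bar q) := Set.mem_image_of_mem _ hi
    rw [Heap.union_f, hC, ha.apply_eq_none (hS ▸ hiS), Option.or_none]
  · have hC := cells_apply_of_notMem σ (mt (Set.image_mono hBX ·) hl)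
    simp [hC]

theorem of_avoids (hs : Set.InjOn s (Set.Icc 1 (2 * q))) (hh : hp.Avoids (storeLocs q s)) :
    Encodes q s ∅ σ hp hp :=
  ⟨hs, Finset.empty_subset _, by simp, fun i hi _ => hh.apply_eq_none (Set.mem_image_of_mem s hi),
    fun _ _ => rfl, hh, by simp⟩

theorem cells_disj (E : Encodes q s A σ hp h) {B : Finset Var} (hB : B ⊆ A) {h₁ : Heap}
    (ha : h₁.Avoids (storeLocs q s)) : (cells B (s ∘ bar q) σ).Disj (h.union h₁) := fun l => by
  by_cases hl : l ∈ (s ∘ bar q) '' B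
  · obtain ⟨z, hz, rfl⟩ := hl
    have hbz := bar_mapsTo q (E.mem_Icc (hB hz))
    right
    rw [Function.comp_apply, Heap.union_f, ha.apply_eq_none (Set.mem_image_of_mem s hbz),
      E.apply_inactive _ hbz (bar_notMem E.subset (E.subset (hB hz))), Option.or_none]
  · exact Or.inl (cells_apply_of_notMem σ hl)

theorem union_cells_union (E : Encodes q s A σ hp h) {B : Finset Var} (hB : B ⊆ A) {h₁ : Heap}
    (ha : h₁.Avoids (storeLocs q s)) :
    h.union ((cells B (s ∘ bar q) σ).union h₁) = (cells B (s ∘ bar q) σ).union (h.union h₁) := by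
  rw [← Heap.union_assoc, Heap.union_comm (E.cells_disj hB ha).of_union_right.symm,
    Heap.union_assoc]

theorem ncard_dom_cells (E : Encodes q s A σ hp h) {B : Finset Var} (hB : B ⊆ A) :
    (cells B (s ∘ bar q) σ).dom.ncard = B.card := by
  rw [dom_cells, ((Set.InjOn.comp_bar E.injOn).mono fun z hz => E.mem_Icc (hB hz)).ncard_image,
    Set.ncard_coe_finset]

-- `Ha` contains the cells and has as many locations, so it is exactly the cells.
theorem eq_of_union_eq_union_cells (E : Encodes q s A σ hp h) {B : Finset Var} (hB : B ⊆ A)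
    {h₁ : Heap} (ha : h₁.Avoids (storeLocs q s)) {Ha Hb : Heap} (hab : Ha.Disj Hb)
    (hU : Ha.union Hb = h.union ((cells B (s ∘ bar q) σ).union h₁))
    (hdom : ∀ z ∈ B, s (bar q z) ∈ Ha.dom) (hcard : Ha.dom.ncard = B.card) :
    Hb = h.union h₁ := by
  have hsub : (cells B (s ∘ bar q) σ).dom ⊆ Ha.dom := by
    rw [dom_cells]
    rintro _ ⟨z, hz, rfl⟩
    exact hdom z hz
  have hHa : Ha.dom = (cells B (s ∘ bar q) σ).dom := by
    refine (Set.eq_of_subset_of_ncard_le hsub ?_ Ha.dom_finite).symm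
    rw [hcard, E.ncard_dom_cells hB]
  rw [E.union_cells_union hB ha] at hU
  exact Heap.eq_of_union_eq_union hab (E.cells_disj hB ha) hHa hU

-- The guard `n(z) = n(z̄)` forces the cell of `z̄` to hold the current value `σ z`.
theorem exists_eq_cells_union (E : Encodes q s A σ hp h) {B : Finset Var} (hB : B ⊆ A)
    {h₁' : Heap} (hd : h₁'.Disj h)
    (hinactive : ∀ v ∈ Set.Icc 1 (2 * q), v ∉ B → s (bar q v) ∉ h₁'.dom)
    (hran : Disjoint h₁'.ran (storeLocs q s))
    (hguard : ∀ z ∈ B, (h.union h₁').f (s z) = (h.union h₁').f (s (bar q z))) :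
    ∃ h₁ : Heap, h₁.Avoids (storeLocs q s) ∧ h₁.Disj hp ∧
      h₁' = (cells B (s ∘ bar q) σ).union h₁ := by
  have hBX : (B : Set Var) ⊆ Set.Icc 1 (2 * q) := fun z hz => E.mem_Icc (hB hz)
  have hinj := Set.InjOn.comp_bar E.injOn
  refine ⟨h₁'.restrict (· ∉ storeLocs q s), ⟨?_, ?_⟩, fun l => ?_, Heap.ext fun l => ?_⟩
  · exact Set.disjoint_left.mpr fun l hl hlS => hl (by simp [hlS])
  · exact Set.disjoint_of_subset_left (Heap.ran_restrict_subset _ _) hran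
  · by_cases hlS : l ∈ storeLocs q s
    · exact Or.inl (by simp [hlS])
    · rw [← E.apply_of_notMem l hlS]
      exact (hd l).imp_left fun h => by simp [h]
  by_cases hlS : l ∈ storeLocs q s
  · obtain ⟨i, hi, rfl⟩ := hlS
    have hj := bar_mapsTo q hi
    have hsi : s i = (s ∘ bar q) (bar q i) := by simp [bar_bar hi]
    have hiS : s i ∈ storeLocs q s := Set.mem_image_of_mem s hi
    rw [Heap.union_f, Heap.restrict_f, if_neg (not_not.mpr hiS), Option.or_none, hsi]
    by_cases hjB : bar q i ∈ B
    · have := hguard _ hjB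
      rw [Heap.union_f, Heap.union_f, E.apply_active _ (hB hjB), E.apply_inactive _
        (bar_mapsTo q hj) (bar_notMem E.subset (E.subset (hB hjB))), Option.some_or,
        Option.none_or] at this
      rw [cells_apply σ (hinj.mono hBX) hjB]
      exact this.symm
    · rw [cells_apply_of_notMem σ (mt (hinj.mem_image_iff hBX hj).mp hjB)]
      exact Heap.notMem_dom.mp (hinactive _ hj hjB)
  · have hC := cells_apply_of_notMem σ (B := B)
      (mt (Set.image_mono hBX ·) (by rwa [← storeLocs, storeLocs_comp_bar]))
    simp [hC, hlS]

theorem union_bar_cells_union_apply (E : Encodes q s A σ hp h) {B : Finset Var} (hB : B ⊆ A)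
    {h₁ : Heap} (ha : h₁.Avoids (storeLocs q s)) {z : Var} (hz : z ∈ B) :
    (h.union ((cells B (s ∘ bar q) σ).union h₁)).f (s z) = some (σ z) ∧
      (h.union ((cells B (s ∘ bar q) σ).union h₁)).f (s (bar q z)) = some (σ z) := by
  refine ⟨by simp [E.apply_active z (hB hz)], ?_⟩
  rw [Heap.union_f, E.apply_inactive _ (bar_mapsTo q (E.mem_Icc (hB hz)))
    (bar_notMem E.subset (E.subset (hB hz))), Option.none_or]
  exact (E.bar_cells_union hB ha).apply_active z hz

theorem TSat_T_wand_iff (E : Encodes q s A σ hp h) {φ ψ : FForm} (hfv : φ.fv ⊆ A) :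
    TSat s h (T q (.wand φ ψ)) ↔ ∀ h₁ : Heap, h₁.Avoids (storeLocs q s) → h₁.Disj hp →
      TSat (s ∘ bar q) ((cells φ.fv (s ∘ bar q) σ).union h₁) (T q φ) →
      TSat s (h.union h₁) (T q ψ) := by
  rw [TSat_T_wand]
  constructor
  · intro H h₁ ha hd hφ
    have EL := E.bar_cells_union hfv ha
    have hS := storeLocs_comp_bar q s
    have hval := fun z (hz : z ∈ φ.fv) => E.union_bar_cells_union_apply hfv ha hz
    obtain ⟨Ha, Hb, hab, hU, hdom, hcard, hψ⟩ := H _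
      ((E.cells_disj hfv ha).of_union_right.union_left (E.disj_of_avoids ha hd))
      (fun z hz => EL.mem_dom hz)
      (fun v hv hvB => Heap.notMem_dom.mpr (EL.apply_inactive v hv hvB))
      ((TSat_SafeF _ _ _).mpr ⟨E.injOn, hS ▸ EL.ran_disjoint⟩) hφ
      (fun z hz => by simp only [Heap.mem_dom, (hval z hz).1, (hval z hz).2]; simp)
      ((TSat_SafeF _ _ _).mpr ⟨E.injOn, Set.disjoint_of_subset_left (Heap.ran_union_subset _ _)
        (Set.disjoint_union_left.mpr ⟨E.ran_disjoint, hS ▸ EL.ran_disjoint⟩)⟩)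
    exact E.eq_of_union_eq_union_cells hfv ha hab hU hdom hcard ▸ hψ
  · intro H h₁' hd _ hinactive hsafe hφ hguard _
    obtain ⟨h₁, ha, hd₁, rfl⟩ := E.exists_eq_cells_union hfv hd hinactive
      ((TSat_SafeF _ _ _).mp hsafe).2 fun z hz => (hguard z hz).2.2
    refine ⟨_, _, E.cells_disj hfv ha, (E.union_cells_union hfv ha).symm, fun z hz => ?_,
      E.ncard_dom_cells hfv, H h₁ ha hd₁ hφ⟩
    rw [dom_cells]
    exact Set.mem_image_of_mem _ hz

end Encodes

structure FForm.WellScoped (q : ℕ) (A : Finset Var) (φ : FForm) : Prop where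
  fv_subset : φ.fv ⊆ A
  binder_mem : ∀ x ∈ φ.binderList, x ∈ Finset.Icc 1 q
  binder_notMem : ∀ x ∈ φ.binderList, x ∉ A
  nodup : φ.binderList.Nodup

namespace FForm.WellScoped

variable {q : ℕ} {A : Finset Var} {φ ψ : FForm}

theorem or_left (h : (FForm.or φ ψ).WellScoped q A) : φ.WellScoped q A :=
  ⟨Finset.union_subset_left h.fv_subset, fun x hx => h.binder_mem x (List.mem_append_left _ hx),
    fun x hx => h.binder_notMem x (List.mem_append_left _ hx), h.nodup.of_append_left⟩

theorem or_right (h : (FForm.or φ ψ).WellScoped q A) : ψ.WellScoped q A :=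
  ⟨Finset.union_subset_right h.fv_subset,
    fun x hx => h.binder_mem x (List.mem_append_right _ hx),
    fun x hx => h.binder_notMem x (List.mem_append_right _ hx), h.nodup.of_append_right⟩

theorem wand_left (h : (FForm.wand φ ψ).WellScoped q A) : φ.WellScoped q φ.fv :=
  ⟨subset_rfl, fun x hx => h.binder_mem x (List.mem_append_left _ hx),
    fun x hx hfv => h.binder_notMem x (List.mem_append_left _ hx)
      (Finset.union_subset_left h.fv_subset hfv),
    h.nodup.of_append_left⟩

theorem wand_right (h : (FForm.wand φ ψ).WellScoped q A) : ψ.WellScoped q A :=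
  (show (FForm.or φ ψ).WellScoped q A from ⟨h.fv_subset, h.binder_mem, h.binder_notMem,
    h.nodup⟩).or_right

theorem all {x : Var} (h : (FForm.all x φ).WellScoped q A) : φ.WellScoped q (insert x A) := by
  obtain ⟨hfv, hmem, hnotMem, hnodup⟩ := h
  simp only [FForm.binderList, List.mem_cons, forall_eq_or_imp, List.nodup_cons]
    at hmem hnotMem hnodup
  refine ⟨fun y hy => ?_, hmem.2, fun y hy => ?_, hnodup.2⟩
  · by_cases hyx : y = x
    · exact hyx ▸ Finset.mem_insert_self x A
    · exact Finset.mem_insert_of_mem (hfv (Finset.mem_erase.mpr ⟨hyx, hy⟩))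
  · rw [Finset.mem_insert, not_or]
    exact ⟨fun e => hnodup.1 (e ▸ hy), hnotMem.2 y hy⟩

end FForm.WellScoped

theorem FSat_iff_TSat_T {q : ℕ} {φ : FForm} :
    ∀ {A : Finset Var} {s σ : Var → Loc} {hp h : Heap}, Encodes q s A σ hp h →
      φ.WellScoped q A → (FSat σ hp φ ↔ TSat s h (T q φ)) := by
  induction φ with
  | eq x y =>
    intro A s σ hp h E hφ
    exact (E.TSat_nEq_iff (hφ.fv_subset (by simp [FForm.fv]))
      (hφ.fv_subset (by simp [FForm.fv]))).symm
  | pto x y =>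
    intro A s σ hp h E hφ
    exact (E.TSat_nPto_iff (hφ.fv_subset (by simp [FForm.fv]))
      (hφ.fv_subset (by simp [FForm.fv]))).symm
  | not φ ih =>
    exact fun E hφ => not_congr (ih E ⟨hφ.fv_subset, hφ.binder_mem, hφ.binder_notMem, hφ.nodup⟩)
  | or φ ψ ih₁ ih₂ =>
    exact fun E hφ =>
      (or_congr (ih₁ E hφ.or_left) (ih₂ E hφ.or_right)).trans (TSat_tOr _ _ _ _).symm
  | all x φ ih =>
    intro A s σ hp h E hφ
    have hx := hφ.binder_mem x List.mem_cons_self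
    have hxA := hφ.binder_notMem x List.mem_cons_self
    calc FSat σ hp (.all x φ)
        ↔ ∀ ℓ ∉ storeLocs q s, FSat (Function.update σ x ℓ) hp φ :=
          FSat_all_iff_forall_notMem (storeLocs_finite q s) E.avoids
            fun y hy => E.store_notMem y (hφ.fv_subset hy)
      _ ↔ ∀ ℓ ∉ storeLocs q s, TSat s (h.union (Heap.single (s x) ℓ)) (T q φ) :=
          forall₂_congr fun ℓ hℓ => ih (E.update hx hxA hℓ) hφ.all
      _ ↔ TSat s h (T q (.all x φ)) := by
          rw [TSat_T_all_iff (E.apply_inactive x (mem_Icc_double hx) hxA)]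
          simp only [E.safe_union_single_iff (mem_Icc_double hx) hxA]
  | wand φ ψ ih₁ ih₂ =>
    intro A s σ hp h E hφ
    have hfv : φ.fv ⊆ A := Finset.union_subset_left hφ.fv_subset
    calc FSat σ hp (.wand φ ψ)
        ↔ ∀ h₁ : Heap, h₁.Avoids (storeLocs q s) → h₁.Disj hp → FSat σ h₁ φ →
            FSat σ (hp.union h₁) ψ :=
          FSat_wand_iff_forall_avoids (storeLocs_finite q s) E.avoids
            fun y hy => E.store_notMem y (hφ.fv_subset hy)
      _ ↔ ∀ h₁ : Heap, h₁.Avoids (storeLocs q s) → h₁.Disj hp →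
            TSat (s ∘ bar q) ((cells φ.fv (s ∘ bar q) σ).union h₁) (T q φ) →
            TSat s (h.union h₁) (T q ψ) :=
          forall_congr' fun h₁ => forall_congr' fun ha => forall_congr' fun _ =>
            imp_congr (ih₁ (E.bar_cells_union hfv ha) hφ.wand_left)
              (ih₂ (E.union_of_avoids ha) hφ.wand_right)
      _ ↔ TSat s h (T q (.wand φ ψ)) := (E.TSat_T_wand_iff hfv).symm

theorem TSat_TVAL (q : ℕ) (φ : FForm) (s : Var → Loc) (h : Heap) :
    TSat s h (TVAL q φ) ↔
      (Set.InjOn s (Set.Icc 1 (2 * q)) → h.Avoids (storeLocs q s) → TSat s h (T q φ)) := by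
  have hdom : (∀ i ∈ Set.Icc 1 (2 * q), s i ∉ h.dom) ↔ Disjoint h.dom (storeLocs q s) := by
    simp only [storeLocs, Set.disjoint_right, Set.forall_mem_image]
  simp only [TVAL, TSat_tImp, TSat, TSat_bigAnd_map, TSat_tAlloc, TSat_SafeF, mem_varsX, hdom,
    Heap.Avoids]
  tauto

theorem exists_injOn_avoids (q : ℕ) (h : Heap) :
    ∃ s : Var → Loc, Set.InjOn s (Set.Icc 1 (2 * q)) ∧ h.Avoids (storeLocs q s) := by
  obtain ⟨N, hN⟩ := (h.dom_finite.union h.ran_finite).bddAbove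
  have hfresh : ∀ l ∈ h.dom ∪ h.ran, l ∉ storeLocs q (fun i => N + 1 + i) := by
    rintro l hl ⟨i, -, rfl⟩
    have : N + 1 + i ≤ N := hN hl
    unfold Loc at *
    omega
  refine ⟨fun i => N + 1 + i, fun i _ j _ e => by simpa using e, ?_, ?_⟩
  · exact Set.disjoint_left.mpr fun l hl => hfresh l (Or.inl hl)
  · exact Set.disjoint_left.mpr fun l hl => hfresh l (Or.inr hl)

/-- A closed `FOSL(−∗)` formula `φ` with quantified variables among
`{x₁,…,x_q}` (distinct quantifications using distinct variables) is valid
iff `T_VAL(φ)` is valid. -/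
theorem equivalid (q : ℕ) (φ : FForm)
    (hclosed : φ.fv = ∅)
    (hbv : ∀ x ∈ φ.binderList, x ∈ Finset.Icc 1 q)
    (hnodup : φ.binderList.Nodup) :
    (∀ (s : Var → Loc) (h : Heap), FSat s h φ) ↔
      (∀ (s : Var → Loc) (h : Heap), TSat s h (TVAL q φ)) := by
  have key : ∀ s σ h, Set.InjOn s (Set.Icc 1 (2 * q)) → h.Avoids (storeLocs q s) →
      (FSat σ h φ ↔ TSat s h (T q φ)) := fun s σ h hs hh =>
    FSat_iff_TSat_T (Encodes.of_avoids hs hh)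
      ⟨hclosed.subset, hbv, fun x _ => Finset.notMem_empty x, hnodup⟩
  simp only [TSat_TVAL]
  constructor
  · exact fun H s h hs hh => (key s s h hs hh).mp (H s h)
  · intro H σ h
    obtain ⟨s, hs, hh⟩ := exists_injOn_avoids q h
    exact (key s σ h hs hh).mpr (H s h hs hh)

end SL10
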